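/- arXiv:1012.2943 — 3 statements merged into one kernel-verified Lean document; each statement's English description precedes it below -/
import Mathlib

section
/- Let f₁, f₂ be rational functions of the form P(x)/Q(x) with deg P < deg Q, whose poles all lie in the open lower half-plane, and sharing the same poles p₁,…,p_k. Then ∫_ℝ f₁(x) conj(f₂(x)) dx = -2πi · Λ(Π(f₁ conj(f₂))), where Λ(h) = lim_{x→∞} x h(x) for the rational function Π(f₁ conj(f₂)). -/
/-!
Split `f₁ · conj f₂ = gpos + gneg` and compute `∫ f₁ conj f₂` as the limit of `∫_{-R}^{R}`.
A pole of order `≥ 2` contributes nothing in the limit, while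
`∫_{-R}^{R} (x - p)⁻¹ dx = log (1 - p/R) - log (-1 - p/R)` tends to `-πi` if `Im p < 0` and to
`πi` if `Im p > 0`, because `-1 - p/R` approaches the cut of `log` from the side of `-p`.
Hence `∫ f₁ conj f₂ = -πi Λ(gpos) + πi Λ(gneg)`. Finally `Λ(gpos) + Λ(gneg) = Λ(f₁ conj f₂) = 0`,
as `f₁ conj f₂ = O(x⁻²)`; this decay also gives integrability.
-/

open MeasureTheory Complex Filter

open scoped Topology Real ComplexConjugate

lemma ofReal_sub_ne_zero {p : ℂ} (hp : p.im ≠ 0) (x : ℝ) : (x : ℂ) - p ≠ 0 := by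
  intro h
  exact hp (by simpa using (congrArg im h).symm)

lemma tendsto_inv_ofReal_sub (p : ℂ) :
    Tendsto (fun x : ℝ => ((x : ℂ) - p)⁻¹) (Bornology.cobounded ℝ) (𝓝 0) :=
  tendsto_inv₀_cobounded.comp
    ((tendsto_sub_const_cobounded p).comp (RCLike.tendsto_ofReal_cobounded_cobounded ℂ))

lemma tendsto_ofReal_mul_div_ofReal_sub_pow (p c : ℂ) (l : ℕ) :
    Tendsto (fun x : ℝ => (x : ℂ) * (c / ((x : ℂ) - p) ^ (l + 1))) atTop
      (𝓝 (if l = 0 then c else 0)) := by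
  have hw := (tendsto_inv_ofReal_sub p).mono_left IsOrderBornology.atTop_le_cobounded
  have hlim := ((tendsto_const_nhds (x := c)).mul
    ((tendsto_const_nhds (x := (1 : ℂ))).add ((tendsto_const_nhds (x := p)).mul hw))).mul
    (hw.pow l)
  rw [mul_zero, add_zero, mul_one, zero_pow_eq, mul_ite, mul_one, mul_zero] at hlim
  refine hlim.congr' ?_
  filter_upwards [(RCLike.tendsto_ofReal_atTop_cobounded ℂ).eventually_ne_cobounded p] with x hx
  have hxp : (x : ℂ) - p ≠ 0 := sub_ne_zero.mpr hx
  rw [inv_pow]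
  field_simp
  ring

lemma one_add_abs_le_mul_norm_ofReal_sub {p : ℂ} (hp : p.im ≠ 0) (x : ℝ) :
    1 + |x| ≤ ((1 + ‖p‖) / |p.im| + 1) * ‖(x : ℂ) - p‖ := by
  have him : |p.im| ≤ ‖(x : ℂ) - p‖ := by simpa using abs_im_le_norm ((x : ℂ) - p)
  have hre : |x| ≤ ‖(x : ℂ) - p‖ + ‖p‖ := by
    simpa [norm_real] using norm_sub_norm_le (x : ℂ) p
  have hp' : 0 < |p.im| := abs_pos.mpr hp
  calc 1 + |x| ≤ (1 + ‖p‖) / |p.im| * |p.im| + ‖(x : ℂ) - p‖ := by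
        rw [div_mul_cancel₀ _ hp'.ne']; linarith
    _ ≤ (1 + ‖p‖) / |p.im| * ‖(x : ℂ) - p‖ + ‖(x : ℂ) - p‖ := by gcongr
    _ = _ := by ring

lemma norm_div_ofReal_sub_pow_le {p : ℂ} (hp : p.im ≠ 0) (c : ℂ) (l : ℕ) (x : ℝ) :
    ‖c / ((x : ℂ) - p) ^ (l + 1)‖
      ≤ ‖c‖ * ((1 + ‖p‖) / |p.im| + 1) / |p.im| ^ l * (1 + |x|)⁻¹ := by
  have him : |p.im| ≤ ‖(x : ℂ) - p‖ := by simpa using abs_im_le_norm ((x : ℂ) - p)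
  set K := (1 + ‖p‖) / |p.im| + 1
  have hK : 0 < K := by positivity
  have hx := one_add_abs_le_mul_norm_ofReal_sub hp x
  have hrhs : ‖c‖ * K / |p.im| ^ l * (1 + |x|)⁻¹ = ‖c‖ / (|p.im| ^ l * ((1 + |x|) / K)) := by
    field_simp
  rw [hrhs, norm_div, norm_pow, pow_succ]
  gcongr
  rwa [div_le_iff₀ hK, mul_comm]

lemma continuous_div_ofReal_sub_pow {p : ℂ} (hp : p.im ≠ 0) (c : ℂ) (n : ℕ) :
    Continuous fun x : ℝ => c / ((x : ℂ) - p) ^ n :=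
  continuous_const.div (by fun_prop) fun x => pow_ne_zero _ (ofReal_sub_ne_zero hp x)

lemma intervalIntegral_inv_ofReal_sub {p : ℂ} (hp : p.im ≠ 0) (a b : ℝ) :
    ∫ x in a..b, ((x : ℂ) - p)⁻¹ = log ((b : ℂ) - p) - log ((a : ℂ) - p) := by
  refine intervalIntegral.integral_eq_sub_of_hasDerivAt (f := fun x : ℝ => log ((x : ℂ) - p))
    (fun x _ => ?_) ?_
  · have hx : (x : ℂ) - p ∈ slitPlane := by
      rw [mem_slitPlane_iff]; right; simpa using hp
    simpa [one_div] using ((hasDerivAt_id x).ofReal_comp.sub_const p).clog_real hx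
  · simpa [one_div] using (continuous_div_ofReal_sub_pow hp 1 1).intervalIntegrable a b

lemma intervalIntegral_inv_ofReal_sub_symm {p : ℂ} (hp : p.im ≠ 0) {R : ℝ} (hR : 0 < R) :
    ∫ x in (-R)..R, ((x : ℂ) - p)⁻¹ = log (1 - p / R) - log (-1 - p / R) := by
  have hR' : (R : ℂ) ≠ 0 := ofReal_ne_zero.mpr hR.ne'
  have hright : (R : ℂ) - p = R * (1 - p / R) := by field_simp
  have hleft : ((-R : ℝ) : ℂ) - p = R * (-1 - p / R) := by push_cast; field_simp
  have hne : ∀ w : ℂ, (R : ℂ) * w ≠ 0 → w ≠ 0 := fun w h hw => h (by rw [hw, mul_zero])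
  rw [intervalIntegral_inv_ofReal_sub hp, hright, hleft,
    log_ofReal_mul hR (hne _ (hright ▸ ofReal_sub_ne_zero hp R)),
    log_ofReal_mul hR (hne _ (hleft ▸ ofReal_sub_ne_zero hp (-R)))]
  ring

lemma tendsto_div_ofReal_atTop (p : ℂ) : Tendsto (fun R : ℝ => p / R) atTop (𝓝 0) := by
  simpa [div_eq_mul_inv] using (tendsto_const_nhds (x := p)).mul
    ((tendsto_inv_ofReal_sub 0).mono_left IsOrderBornology.atTop_le_cobounded)

lemma tendsto_intervalIntegral_inv_ofReal_sub {p s : ℂ} (hp : p.im ≠ 0)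
    (hs : Tendsto (fun R : ℝ => log (-1 - p / R)) atTop (𝓝 s)) :
    Tendsto (fun R : ℝ => ∫ x in (-R)..R, ((x : ℂ) - p)⁻¹) atTop (𝓝 (-s)) := by
  have hone : Tendsto (fun R : ℝ => log (1 - p / R)) atTop (𝓝 0) := by
    have h := (tendsto_const_nhds (x := (1 : ℂ))).sub (tendsto_div_ofReal_atTop p)
    rw [sub_zero] at h
    simpa [Function.comp_def] using (continuousAt_clog one_mem_slitPlane).tendsto.comp h
  have h := hone.sub hs
  rw [zero_sub] at h
  refine h.congr' ?_
  filter_upwards [eventually_gt_atTop 0] with R hR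
  exact (intervalIntegral_inv_ofReal_sub_symm hp hR).symm

lemma tendsto_neg_one_sub_div_ofReal {p : ℂ} {S : Set ℂ}
    (hS : ∀ R : ℝ, 0 < R → -1 - p / R ∈ S) :
    Tendsto (fun R : ℝ => -1 - p / R) atTop (𝓝[S] (-1)) := by
  refine tendsto_nhdsWithin_iff.mpr ⟨?_, ?_⟩
  · simpa using tendsto_const_nhds.sub (tendsto_div_ofReal_atTop p)
  · filter_upwards [eventually_gt_atTop 0] with R hR using hS R hR

lemma tendsto_intervalIntegral_inv_ofReal_sub_of_im_neg {p : ℂ} (hp : p.im < 0) :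
    Tendsto (fun R : ℝ => ∫ x in (-R)..R, ((x : ℂ) - p)⁻¹) atTop (𝓝 (-(π * I))) := by
  refine tendsto_intervalIntegral_inv_ofReal_sub hp.ne ?_
  have h := tendsto_log_nhdsWithin_im_nonneg_of_re_neg_of_im_zero (z := -1) (by simp) (by simp)
  simpa [Function.comp_def] using h.comp (tendsto_neg_one_sub_div_ofReal fun R hR => by
    simpa [div_ofReal_im] using div_nonpos_of_nonpos_of_nonneg hp.le hR.le)

lemma tendsto_intervalIntegral_inv_ofReal_sub_of_im_pos {p : ℂ} (hp : 0 < p.im) :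
    Tendsto (fun R : ℝ => ∫ x in (-R)..R, ((x : ℂ) - p)⁻¹) atTop (𝓝 (π * I)) := by
  have h := tendsto_log_nhdsWithin_im_neg_of_re_neg_of_im_zero (z := -1) (by simp) (by simp)
  simpa using tendsto_intervalIntegral_inv_ofReal_sub hp.ne' (h.comp
    (tendsto_neg_one_sub_div_ofReal fun R hR => by simpa [div_ofReal_im] using div_pos hp hR))

lemma tendsto_intervalIntegral_inv_ofReal_sub_pow {p : ℂ} (hp : p.im ≠ 0) (l : ℕ) :
    Tendsto (fun R : ℝ => ∫ x in (-R)..R, (((x : ℂ) - p) ^ (l + 2))⁻¹) atTop (𝓝 0) := by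
  set F : ℝ → ℂ := fun x => -((l : ℂ) + 1)⁻¹ * (((x : ℂ) - p)⁻¹) ^ (l + 1)
  have hF : ∀ x : ℝ, HasDerivAt F (((x : ℂ) - p) ^ (l + 2))⁻¹ x := fun x => by
    have hx := ofReal_sub_ne_zero hp x
    have hsub : HasDerivAt (fun y : ℝ => (y : ℂ) - p) 1 x := by
      simpa using (hasDerivAt_id x).ofReal_comp.sub_const p
    refine (((hsub.inv hx).pow (l + 1)).const_mul (-((l : ℂ) + 1)⁻¹)).congr_deriv ?_
    simp only [Pi.inv_apply, Nat.add_sub_cancel, inv_pow]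
    push_cast
    field_simp
    ring
  have hint : ∀ R : ℝ, ∫ x in (-R)..R, (((x : ℂ) - p) ^ (l + 2))⁻¹ = F R - F (-R) := fun R =>
    intervalIntegral.integral_eq_sub_of_hasDerivAt (fun x _ => hF x)
      (by simpa using (continuous_div_ofReal_sub_pow hp 1 (l + 2)).intervalIntegrable (-R) R)
  have hF0 : Tendsto F (Bornology.cobounded ℝ) (𝓝 0) := by
    simpa [F] using ((tendsto_inv_ofReal_sub p).pow (l + 1)).const_mul (-((l : ℂ) + 1)⁻¹)
  simpa [hint] using (hF0.mono_left IsOrderBornology.atTop_le_cobounded).sub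
    (hF0.comp (tendsto_neg_atTop_atBot.mono_right IsOrderBornology.atBot_le_cobounded))

lemma tendsto_intervalIntegral_div_ofReal_sub_pow {p s : ℂ} (hp : p.im ≠ 0)
    (hs : Tendsto (fun R : ℝ => ∫ x in (-R)..R, ((x : ℂ) - p)⁻¹) atTop (𝓝 s)) (c : ℂ) (l : ℕ) :
    Tendsto (fun R : ℝ => ∫ x in (-R)..R, c / ((x : ℂ) - p) ^ (l + 1)) atTop
      (𝓝 (if l = 0 then s * c else 0)) := by
  simp_rw [div_eq_mul_inv, intervalIntegral.integral_const_mul]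
  rcases l with _ | l
  · simpa [mul_comm] using hs.const_mul c
  · simpa using (tendsto_intervalIntegral_inv_ofReal_sub_pow hp l).const_mul c

section PartialFraction

variable {ι : Type*} [Fintype ι] {n : ι → ℕ}

noncomputable def partialFraction (q : ι → ℂ) (d : (j : ι) → Fin (n j) → ℂ) (x : ℝ) : ℂ :=
  ∑ j, ∑ l, d j l / ((x : ℂ) - q j) ^ ((l : ℕ) + 1)

-- `Λ` in the paper.
def residueSum (d : (j : ι) → Fin (n j) → ℂ) : ℂ :=
  ∑ j, ∑ l : Fin (n j), if (l : ℕ) = 0 then d j l else 0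

lemma tendsto_ofReal_mul_partialFraction (q : ι → ℂ) (d : (j : ι) → Fin (n j) → ℂ) :
    Tendsto (fun x : ℝ => (x : ℂ) * partialFraction q d x) atTop (𝓝 (residueSum d)) := by
  simp only [partialFraction, residueSum, Finset.mul_sum]
  exact tendsto_finsetSum _ fun j _ => tendsto_finsetSum _ fun l _ =>
    tendsto_ofReal_mul_div_ofReal_sub_pow _ _ _

lemma tendsto_partialFraction (q : ι → ℂ) (d : (j : ι) → Fin (n j) → ℂ) :
    Tendsto (partialFraction q d) atTop (𝓝 0) := by
  have hinv := (tendsto_inv_ofReal_sub 0).mono_left IsOrderBornology.atTop_le_cobounded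
  have h := (tendsto_ofReal_mul_partialFraction q d).mul hinv
  rw [mul_zero] at h
  refine h.congr' ?_
  filter_upwards [eventually_ne_atTop 0] with x hx
  rw [sub_zero, mul_comm, inv_mul_cancel_left₀ (ofReal_ne_zero.mpr hx)]

lemma continuous_partialFraction {q : ι → ℂ} (hq : ∀ j, (q j).im ≠ 0)
    (d : (j : ι) → Fin (n j) → ℂ) : Continuous (partialFraction q d) :=
  continuous_finsetSum _ fun j _ => continuous_finsetSum _ fun _ _ =>
    continuous_div_ofReal_sub_pow (hq j) _ _

lemma exists_norm_partialFraction_le {q : ι → ℂ} (hq : ∀ j, (q j).im ≠ 0)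
    (d : (j : ι) → Fin (n j) → ℂ) :
    ∃ C, ∀ x, ‖partialFraction q d x‖ ≤ C * (1 + |x|)⁻¹ := by
  refine ⟨∑ j, ∑ l : Fin (n j),
    ‖d j l‖ * ((1 + ‖q j‖) / |(q j).im| + 1) / |(q j).im| ^ (l : ℕ), fun x => ?_⟩
  simp only [partialFraction, Finset.sum_mul]
  exact (norm_sum_le _ _).trans <| Finset.sum_le_sum fun j _ => (norm_sum_le _ _).trans <|
    Finset.sum_le_sum fun l _ => norm_div_ofReal_sub_pow_le (hq j) _ _ _

lemma integrable_partialFraction_mul_conj {κ : Type*} [Fintype κ] {n' : κ → ℕ}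
    {q : ι → ℂ} {q' : κ → ℂ} (hq : ∀ j, (q j).im ≠ 0) (hq' : ∀ j, (q' j).im ≠ 0)
    (d : (j : ι) → Fin (n j) → ℂ) (d' : (j : κ) → Fin (n' j) → ℂ) :
    Integrable fun x => partialFraction q d x * conj (partialFraction q' d' x) := by
  obtain ⟨C, hC⟩ := exists_norm_partialFraction_le hq d
  obtain ⟨C', hC'⟩ := exists_norm_partialFraction_le hq' d'
  have hcont := (continuous_partialFraction hq d).mul
    (continuous_conj.comp (continuous_partialFraction hq' d'))
  refine (integrable_inv_one_add_sq.const_mul (C * C')).mono' hcont.aestronglyMeasurable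
    (Eventually.of_forall fun x => ?_)
  have hC0 : 0 ≤ C := by simpa using (norm_nonneg _).trans (hC 0)
  have hC0' : 0 ≤ C' := by simpa using (norm_nonneg _).trans (hC' 0)
  have hsq : 1 + x ^ 2 ≤ (1 + |x|) ^ 2 := by nlinarith [abs_nonneg x, sq_abs x]
  calc ‖partialFraction q d x * conj (partialFraction q' d' x)‖
      ≤ C * (1 + |x|)⁻¹ * (C' * (1 + |x|)⁻¹) := by
        rw [norm_mul, RCLike.norm_conj]
        exact mul_le_mul (hC x) (hC' x) (norm_nonneg _) (by positivity)
    _ = C * C' * ((1 + |x|) ^ 2)⁻¹ := by rw [← inv_pow]; ring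
    _ ≤ C * C' * (1 + x ^ 2)⁻¹ := by gcongr

lemma tendsto_ofReal_mul_partialFraction_mul_conj {κ : Type*} [Fintype κ] {n' : κ → ℕ}
    (q : ι → ℂ) (q' : κ → ℂ) (d : (j : ι) → Fin (n j) → ℂ) (d' : (j : κ) → Fin (n' j) → ℂ) :
    Tendsto (fun x : ℝ => (x : ℂ) * (partialFraction q d x * conj (partialFraction q' d' x)))
      atTop (𝓝 0) := by
  simpa [mul_assoc] using (tendsto_ofReal_mul_partialFraction q d).mul
    ((continuous_conj.tendsto 0).comp (tendsto_partialFraction q' d'))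

lemma tendsto_intervalIntegral_partialFraction {q : ι → ℂ} (hq : ∀ j, (q j).im ≠ 0) {s : ℂ}
    (hs : ∀ j, Tendsto (fun R : ℝ => ∫ x in (-R)..R, ((x : ℂ) - q j)⁻¹) atTop (𝓝 s))
    (d : (j : ι) → Fin (n j) → ℂ) :
    Tendsto (fun R : ℝ => ∫ x in (-R)..R, partialFraction q d x) atTop
      (𝓝 (s * residueSum d)) := by
  have hterm : ∀ j (l : Fin (n j)) (R : ℝ),
      IntervalIntegrable (fun x : ℝ => d j l / ((x : ℂ) - q j) ^ ((l : ℕ) + 1)) volume (-R) R :=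
    fun j l R => (continuous_div_ofReal_sub_pow (hq j) _ _).intervalIntegrable _ _
  have hsplit : ∀ R : ℝ, ∫ x in (-R)..R, partialFraction q d x
      = ∑ j, ∑ l, ∫ x in (-R)..R, d j l / ((x : ℂ) - q j) ^ ((l : ℕ) + 1) := fun R => by
    simp only [partialFraction]
    rw [intervalIntegral.integral_finsetSum fun j _ => ?_]
    · exact Finset.sum_congr rfl fun j _ =>
        intervalIntegral.integral_finsetSum fun l _ => hterm j l R
    · exact (continuous_finsetSum _ fun l _ =>
        continuous_div_ofReal_sub_pow (hq j) _ _).intervalIntegrable _ _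
  simp only [hsplit, residueSum, Finset.mul_sum, mul_ite, mul_zero]
  exact tendsto_finsetSum _ fun j _ => tendsto_finsetSum _ fun l _ =>
    tendsto_intervalIntegral_div_ofReal_sub_pow (hq j) (hs j) _ _

end PartialFraction

/-- **Integral formula via the Szegő projection of a product of rational functions.**
Let `f₁, f₂` be rational functions vanishing at infinity, all of whose poles `p_j`
lie in the open lower half-plane (with multiplicities `m_j`), written in partial
fractions.  Split the product `f₁ · conj f₂` into its lower-half-plane part `gpos`
(which is exactly `Π(f₁ conj f₂)`) and its upper-half-plane part `gneg`.  If
`Λ(gpos) = lim_{x→∞} x·gpos(x) = L`, then `∫ f₁ conj f₂ = -2πi·L`. -/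
theorem stmt_7 (k : ℕ) (p : Fin k → ℂ) (hp : ∀ j, (p j).im < 0) (m : Fin k → ℕ)
    (c₁ c₂ : (j : Fin k) → Fin (m j) → ℂ)
    (b b' : (j : Fin k) → Fin (2 * m j) → ℂ)
    (f₁ f₂ gpos gneg : ℝ → ℂ) (L : ℂ)
    (hf₁ : ∀ x : ℝ, f₁ x = ∑ j, ∑ l, c₁ j l / ((x : ℂ) - p j) ^ ((l : ℕ) + 1))
    (hf₂ : ∀ x : ℝ, f₂ x = ∑ j, ∑ l, c₂ j l / ((x : ℂ) - p j) ^ ((l : ℕ) + 1))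
    (hgpos : ∀ x : ℝ, gpos x = ∑ j, ∑ l, b j l / ((x : ℂ) - p j) ^ ((l : ℕ) + 1))
    (hgneg : ∀ x : ℝ, gneg x = ∑ j, ∑ l, b' j l / ((x : ℂ) - (starRingEnd ℂ) (p j)) ^ ((l : ℕ) + 1))
    (hsplit : ∀ x : ℝ, f₁ x * (starRingEnd ℂ) (f₂ x) = gpos x + gneg x)
    (hΛ : Tendsto (fun x : ℝ => (x : ℂ) * gpos x) atTop (nhds L)) :
    ∫ x : ℝ, f₁ x * (starRingEnd ℂ) (f₂ x) = -2 * (Real.pi : ℂ) * Complex.I * L := by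
  obtain rfl : f₁ = partialFraction p c₁ := funext hf₁
  obtain rfl : f₂ = partialFraction p c₂ := funext hf₂
  obtain rfl : gpos = partialFraction p b := funext hgpos
  obtain rfl : gneg = partialFraction (fun j => conj (p j)) b' := funext hgneg
  have hp' : ∀ j, (p j).im ≠ 0 := fun j => (hp j).ne
  have hq : ∀ j, 0 < (conj (p j)).im := fun j => by simpa using hp j
  have hb : residueSum b = L := tendsto_nhds_unique (tendsto_ofReal_mul_partialFraction p b) hΛ
  have hb' : residueSum b' = -L := by
    refine tendsto_nhds_unique (tendsto_ofReal_mul_partialFraction (fun j => conj (p j)) b') ?_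
    simpa [hsplit, mul_add] using
      (tendsto_ofReal_mul_partialFraction_mul_conj p p c₁ c₂).sub hΛ
  refine tendsto_nhds_unique (intervalIntegral_tendsto_integral
    (integrable_partialFraction_mul_conj hp' hp' c₁ c₂) tendsto_neg_atTop_atBot tendsto_id) ?_
  have hlim := (tendsto_intervalIntegral_partialFraction hp'
      (fun j => tendsto_intervalIntegral_inv_ofReal_sub_of_im_neg (hp j)) b).add
    (tendsto_intervalIntegral_partialFraction (fun j => (hq j).ne')
      (fun j => tendsto_intervalIntegral_inv_ofReal_sub_of_im_pos (hq j)) b')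
  rw [hb, hb'] at hlim
  convert hlim using 1
  · funext R
    rw [← intervalIntegral.integral_add
      ((continuous_partialFraction hp' b).intervalIntegrable _ _)
      ((continuous_partialFraction (fun j => (hq j).ne') b').intervalIntegrable _ _)]
    simp only [id, hsplit]
  · congr 1
    ring
end

section
/- Let u be a bounded holomorphic function on the upper half-plane with bounded continuous boundary values on ℝ such that x·u(x) is bounded on ℝ. Then z·u(z) is bounded on the closed upper half-plane; in particular u(i/ε) → 0 as ε → 0⁺. -/
open MeasureTheory Complex Filter Metric Topology ComplexConjugate

/-!
Let `𝒞V(w) = ∫ V x / (x - w) dx` be the Cauchy transform of the boundary values. The Poisson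
kernel splits as `y / |z - x|² = (2i)⁻¹ (1 / (x - z) - 1 / (x - z̄))`, so in the upper half-plane
`U = (𝒞U - 𝒞U ∘ conj) / (2πi)`. Hence `G(z) = 𝒞U(z̄)` is holomorphic there (it equals
`𝒞U - 2πi U`), while `conj ∘ G` is the Cauchy transform of `Ū`, also holomorphic; so `G' = 0`,
`G` is constant, and since it tends to `0` along the imaginary axis, `G = 0`. Finally
`z y / |z - x|² = x y / |z - x|² - y / (x - z̄)`, so `z U(z)` is the Poisson integral of `x U(x)`
and is bounded by `sup |x U(x)|`.
-/

lemma inv_sub_sq_add_sq_eq (a : ℝ) {b : ℝ} (hb : b ≠ 0) :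
    (fun x : ℝ => ((x - a) ^ 2 + b ^ 2)⁻¹) = fun x => (b ^ 2)⁻¹ * (1 + ((x - a) / b) ^ 2)⁻¹ := by
  funext x
  field_simp
  ring

lemma integrable_inv_sub_sq_add_sq (a : ℝ) {b : ℝ} (hb : b ≠ 0) :
    Integrable fun x : ℝ => ((x - a) ^ 2 + b ^ 2)⁻¹ := by
  rw [inv_sub_sq_add_sq_eq a hb]
  exact ((integrable_inv_one_add_sq.comp_div hb).comp_sub_right a).const_mul _

lemma integral_inv_sub_sq_add_sq (a : ℝ) {b : ℝ} (hb : 0 < b) :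
    ∫ x : ℝ, ((x - a) ^ 2 + b ^ 2)⁻¹ = Real.pi / b := by
  rw [inv_sub_sq_add_sq_eq a hb.ne', integral_const_mul,
    integral_sub_right_eq_self (fun x => (1 + (x / b) ^ 2)⁻¹) a,
    Measure.integral_comp_div (fun x => (1 + x ^ 2)⁻¹),
    integral_univ_inv_one_add_sq, abs_of_pos hb, smul_eq_mul]
  field_simp

lemma norm_ofReal_sub_sq (x : ℝ) (w : ℂ) : ‖(x : ℂ) - w‖ ^ 2 = (x - w.re) ^ 2 + w.im ^ 2 := by
  rw [Complex.sq_norm, normSq_apply]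
  simp only [sub_re, ofReal_re, sub_im, ofReal_im]
  ring

lemma abs_im_le_norm_ofReal_sub (x : ℝ) (w : ℂ) : |w.im| ≤ ‖(x : ℂ) - w‖ := by
  simpa using abs_im_le_norm ((x : ℂ) - w)

lemma ofReal_sub_ne_zero_s11 (x : ℝ) {w : ℂ} (hw : w.im ≠ 0) : (x : ℂ) - w ≠ 0 :=
  norm_pos_iff.mp ((abs_pos.mpr hw).trans_le (abs_im_le_norm_ofReal_sub x w))

noncomputable def cauchyTransform (V : ℝ → ℂ) (w : ℂ) : ℂ := ∫ x : ℝ, V x / ((x : ℂ) - w)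

section CauchyTransform

variable {V : ℝ → ℂ} {C₁ C₂ : ℝ}

lemma norm_div_ofReal_sub_le (hV₁ : ∀ x, ‖V x‖ ≤ C₁) (hV₂ : ∀ x : ℝ, ‖(x : ℂ) * V x‖ ≤ C₂)
    {w : ℂ} (hw : w.im ≠ 0) (x : ℝ) :
    ‖V x / ((x : ℂ) - w)‖ ≤ (C₂ + C₁ * ‖w‖) * ((x - w.re) ^ 2 + w.im ^ 2)⁻¹ := by
  have hd : 0 < ‖(x : ℂ) - w‖ := norm_pos_iff.mpr (ofReal_sub_ne_zero_s11 x hw)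
  have hnum : ‖V x‖ * ‖(x : ℂ) - w‖ ≤ C₂ + C₁ * ‖w‖ :=
    calc ‖V x‖ * ‖(x : ℂ) - w‖ = ‖(x : ℂ) * V x - w * V x‖ := by
          rw [← norm_mul, mul_comm, sub_mul]
      _ ≤ ‖(x : ℂ) * V x‖ + ‖w‖ * ‖V x‖ := by
          rw [← norm_mul]; exact norm_sub_le _ _
      _ ≤ C₂ + C₁ * ‖w‖ := by
          nlinarith [hV₂ x, hV₁ x, norm_nonneg w]
  rw [← norm_ofReal_sub_sq, norm_div, ← div_eq_mul_inv, le_div_iff₀ (pow_pos hd 2)]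
  calc ‖V x‖ / ‖(x : ℂ) - w‖ * ‖(x : ℂ) - w‖ ^ 2 = ‖V x‖ * ‖(x : ℂ) - w‖ := by
        field_simp
    _ ≤ C₂ + C₁ * ‖w‖ := hnum

lemma integrable_div_ofReal_sub (hVm : AEStronglyMeasurable V) (hV₁ : ∀ x, ‖V x‖ ≤ C₁)
    (hV₂ : ∀ x : ℝ, ‖(x : ℂ) * V x‖ ≤ C₂) {w : ℂ} (hw : w.im ≠ 0) :
    Integrable fun x : ℝ => V x / ((x : ℂ) - w) :=
  ((integrable_inv_sub_sq_add_sq w.re hw).const_mul _).mono'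
    (hVm.div₀ (by fun_prop)) (Eventually.of_forall (norm_div_ofReal_sub_le hV₁ hV₂ hw))

lemma norm_ofReal_sub_le_two_mul {w₀ w : ℂ} (hw : w ∈ ball w₀ (|w₀.im| / 2)) (x : ℝ) :
    ‖(x : ℂ) - w₀‖ ≤ 2 * ‖(x : ℂ) - w‖ := by
  have hww₀ : ‖w - w₀‖ < |w₀.im| / 2 := by rwa [mem_ball, dist_eq] at hw
  have him : |w₀.im| - |w.im| ≤ ‖w - w₀‖ :=
    calc |w₀.im| - |w.im| ≤ |(w - w₀).im| := by
          rw [sub_im, abs_sub_comm]; exact abs_sub_abs_le_abs_sub _ _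
      _ ≤ ‖w - w₀‖ := abs_im_le_norm _
  have := norm_sub_le_norm_sub_add_norm_sub (x : ℂ) w w₀
  linarith [abs_im_le_norm_ofReal_sub x w]

lemma hasDerivAt_div_ofReal_sub (v : ℂ) (x : ℝ) {w : ℂ} (hw : (x : ℂ) - w ≠ 0) :
    HasDerivAt (fun w => v / ((x : ℂ) - w)) (v / ((x : ℂ) - w) ^ 2) w := by
  have := (((hasDerivAt_id w).const_sub (x : ℂ)).inv hw).const_mul v
  simpa [div_eq_mul_inv] using this

lemma hasDerivAt_cauchyTransform (hVm : AEStronglyMeasurable V) (hV₁ : ∀ x, ‖V x‖ ≤ C₁)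
    (hV₂ : ∀ x : ℝ, ‖(x : ℂ) * V x‖ ≤ C₂) {w₀ : ℂ} (hw₀ : w₀.im ≠ 0) :
    HasDerivAt (cauchyTransform V) (∫ x : ℝ, V x / ((x : ℂ) - w₀) ^ 2) w₀ := by
  have hC₁ : 0 ≤ C₁ := (norm_nonneg _).trans (hV₁ 0)
  have hball : ball w₀ (|w₀.im| / 2) ∈ 𝓝 w₀ := ball_mem_nhds w₀ (by positivity)
  have hsub_pos : ∀ w ∈ ball w₀ (|w₀.im| / 2), ∀ x : ℝ, 0 < ‖(x : ℂ) - w‖ := fun w hw x => by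
    have := norm_pos_iff.mpr (ofReal_sub_ne_zero_s11 x hw₀)
    linarith [norm_ofReal_sub_le_two_mul hw x]
  refine (hasDerivAt_integral_of_dominated_loc_of_deriv_le (μ := volume)
    (F := fun w (x : ℝ) => V x / ((x : ℂ) - w)) (F' := fun w (x : ℝ) => V x / ((x : ℂ) - w) ^ 2)
    (bound := fun x => 4 * C₁ * ((x - w₀.re) ^ 2 + w₀.im ^ 2)⁻¹) hball
    (Eventually.of_forall fun w => hVm.div₀ (by fun_prop))
    (integrable_div_ofReal_sub hVm hV₁ hV₂ hw₀) (hVm.div₀ (by fun_prop))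
    (Eventually.of_forall fun x w hw => ?_)
    ((integrable_inv_sub_sq_add_sq w₀.re hw₀).const_mul _)
    (Eventually.of_forall fun x w hw =>
      hasDerivAt_div_ofReal_sub (V x) x (norm_pos_iff.mp (hsub_pos w hw x)))).2
  have h₀ := norm_ofReal_sub_le_two_mul hw x
  have hx₀ := norm_pos_iff.mpr (ofReal_sub_ne_zero_s11 x hw₀)
  rw [← norm_ofReal_sub_sq, norm_div, norm_pow]
  calc ‖V x‖ / ‖(x : ℂ) - w‖ ^ 2 ≤ C₁ / (‖(x : ℂ) - w₀‖ / 2) ^ 2 :=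
        div_le_div₀ hC₁ (hV₁ x) (by positivity) (by gcongr; linarith)
    _ = 4 * C₁ * (‖(x : ℂ) - w₀‖ ^ 2)⁻¹ := by ring

lemma tendsto_cauchyTransform_mul_I_atBot (hVm : AEStronglyMeasurable V) (hV₁ : ∀ x, ‖V x‖ ≤ C₁)
    (hV₂ : ∀ x : ℝ, ‖(x : ℂ) * V x‖ ≤ C₂) :
    Tendsto (fun t : ℝ => cauchyTransform V (t * I)) atBot (𝓝 0) := by
  have hdom : ∀ t : ℝ, t ≤ -1 → ∀ x : ℝ, ‖(x : ℂ) - -I‖ ≤ ‖(x : ℂ) - t * I‖ := by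
    intro t ht x
    rw [← pow_le_pow_iff_left₀ (norm_nonneg _) (norm_nonneg _) two_ne_zero, norm_ofReal_sub_sq,
      norm_ofReal_sub_sq]
    simp only [neg_re, neg_im, mul_re, mul_im, ofReal_re, ofReal_im, I_re, I_im]
    nlinarith
  rw [← integral_zero ℝ ℂ]
  refine tendsto_integral_filter_of_dominated_convergence
    (fun x : ℝ => ‖V x / ((x : ℂ) - -I)‖)
    (Eventually.of_forall fun t => hVm.div₀ (by fun_prop)) ?_
    (integrable_div_ofReal_sub hVm hV₁ hV₂ (by simp)).norm (Eventually.of_forall fun x => ?_)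
  · filter_upwards [eventually_le_atBot (-1)] with t ht
    refine Eventually.of_forall fun x => ?_
    rw [norm_div, norm_div]
    exact div_le_div_of_nonneg_left (norm_nonneg _)
      (norm_pos_iff.mpr (ofReal_sub_ne_zero_s11 x (by simp))) (hdom t ht x)
  · refine squeeze_zero_norm' (a := fun t : ℝ => ‖V x‖ * |t|⁻¹) ?_ ?_
    · filter_upwards [eventually_lt_atBot 0] with t ht
      have h := abs_im_le_norm_ofReal_sub x (t * I)
      simp only [mul_im, ofReal_re, I_im, mul_one, ofReal_im, I_re, mul_zero, add_zero] at h
      rw [norm_div, div_eq_mul_inv]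
      gcongr
      exact abs_pos.mpr ht.ne
    · simpa using (tendsto_inv_atTop_zero.comp tendsto_abs_atBot_atTop).const_mul ‖V x‖

lemma conj_cauchyTransform (V : ℝ → ℂ) (w : ℂ) :
    conj (cauchyTransform V w) = cauchyTransform (fun x => conj (V x)) (conj w) := by
  simp only [cauchyTransform, ← integral_conj, map_div₀, map_sub, conj_ofReal]

end CauchyTransform

lemma HasDerivAt.eq_zero_of_hasDerivAt_conj {f : ℂ → ℂ} {a b z : ℂ} (hf : HasDerivAt f a z)
    (hg : HasDerivAt (fun w => conj (f w)) b z) : a = 0 := by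
  have h₁ := hf.hasFDerivAt.restrictScalars ℝ
  have h₂ := conjCLE.toContinuousLinearMap.hasFDerivAt.comp z (hg.hasFDerivAt.restrictScalars ℝ)
  simp only [Function.comp_def] at h₂
  have h₁₂ := h₁.unique (by simpa using h₂)
  have e₁ := congrArg (fun L : ℂ →L[ℝ] ℂ => L 1) h₁₂
  have eI := congrArg (fun L : ℂ →L[ℝ] ℂ => L I) h₁₂
  simp only [ContinuousLinearMap.coe_restrictScalars', ContinuousLinearMap.toSpanSingleton_apply,
    ContinuousLinearMap.coe_comp, ContinuousLinearEquiv.coe_coe, Function.comp_apply, conjCLE_apply,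
    smul_eq_mul, map_mul, map_one, conj_I] at e₁ eI
  have h2Ia : (2 * I) * a = 0 := by linear_combination eI + I * e₁
  simpa using h2Ia

lemma ofReal_norm_sub_sq_eq_mul (z : ℂ) (x : ℝ) :
    ((‖z - x‖ ^ 2 : ℝ) : ℂ) = ((x : ℂ) - z) * ((x : ℂ) - conj z) := by
  rw [ofReal_pow, ← mul_conj', map_sub, conj_ofReal]
  ring

lemma poisson_eq_sub_div (v : ℂ) (x : ℝ) {z : ℂ} (hz : z.im ≠ 0) :
    (z.im : ℂ) * v / ((‖z - x‖ ^ 2 : ℝ) : ℂ)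
      = (2 * I)⁻¹ * (v / ((x : ℂ) - z) - v / ((x : ℂ) - conj z)) := by
  have h₁ := ofReal_sub_ne_zero_s11 x hz
  have h₂ := ofReal_sub_ne_zero_s11 x (w := conj z) (by simpa using hz)
  rw [ofReal_norm_sub_sq_eq_mul]
  field_simp
  rw [sub_sub_sub_cancel_left, sub_conj]
  push_cast
  ring

lemma mul_poisson_eq_sub (v : ℂ) (x : ℝ) {z : ℂ} (hz : z.im ≠ 0) :
    z * ((z.im : ℂ) * v / ((‖z - x‖ ^ 2 : ℝ) : ℂ))
      = (z.im : ℂ) * (x * v) / ((‖z - x‖ ^ 2 : ℝ) : ℂ) - z.im * (v / ((x : ℂ) - conj z)) := by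
  have h₁ := ofReal_sub_ne_zero_s11 x hz
  have h₂ := ofReal_sub_ne_zero_s11 x (w := conj z) (by simpa using hz)
  rw [ofReal_norm_sub_sq_eq_mul]
  field_simp
  ring

section PoissonIntegral

variable {f : ℝ → ℂ} {C : ℝ} {z : ℂ}

lemma norm_poisson_mul_le (hf : ∀ x, ‖f x‖ ≤ C) (hz : 0 < z.im) (x : ℝ) :
    ‖(z.im : ℂ) * f x / ((‖z - x‖ ^ 2 : ℝ) : ℂ)‖ ≤ z.im * C * ((x - z.re) ^ 2 + z.im ^ 2)⁻¹ := by
  rw [norm_div, norm_mul, norm_real, norm_real, Real.norm_of_nonneg hz.le,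
    Real.norm_of_nonneg (sq_nonneg _), norm_sub_rev, norm_ofReal_sub_sq, ← div_eq_mul_inv]
  gcongr
  exact hf x

lemma integrable_poisson_mul (hfm : AEStronglyMeasurable f) (hf : ∀ x, ‖f x‖ ≤ C)
    (hz : 0 < z.im) : Integrable fun x : ℝ => (z.im : ℂ) * f x / ((‖z - x‖ ^ 2 : ℝ) : ℂ) :=
  ((integrable_inv_sub_sq_add_sq z.re hz.ne').const_mul _).mono'
    ((aestronglyMeasurable_const.mul hfm).div₀ (by fun_prop))
    (Eventually.of_forall (norm_poisson_mul_le hf hz))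

lemma norm_integral_poisson_mul_le (hf : ∀ x, ‖f x‖ ≤ C) (hz : 0 < z.im) :
    ‖∫ x : ℝ, (z.im : ℂ) * f x / ((‖z - x‖ ^ 2 : ℝ) : ℂ)‖ ≤ Real.pi * C :=
  calc _ ≤ ∫ x : ℝ, z.im * C * ((x - z.re) ^ 2 + z.im ^ 2)⁻¹ :=
        norm_integral_le_of_norm_le ((integrable_inv_sub_sq_add_sq z.re hz.ne').const_mul _)
          (Eventually.of_forall (norm_poisson_mul_le hf hz))
    _ = Real.pi * C := by
        rw [integral_const_mul, integral_inv_sub_sq_add_sq _ hz]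
        field_simp

end PoissonIntegral

section PoissonCauchy

variable {V : ℝ → ℂ} {C₁ C₂ : ℝ} {z : ℂ}

lemma integral_poisson_eq_cauchyTransform_sub (hVm : AEStronglyMeasurable V)
    (hV₁ : ∀ x, ‖V x‖ ≤ C₁) (hV₂ : ∀ x : ℝ, ‖(x : ℂ) * V x‖ ≤ C₂) (hz : z.im ≠ 0) :
    ∫ x : ℝ, (z.im : ℂ) * V x / ((‖z - x‖ ^ 2 : ℝ) : ℂ)
      = (2 * I)⁻¹ * (cauchyTransform V z - cauchyTransform V (conj z)) := by
  simp_rw [poisson_eq_sub_div _ _ hz]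
  rw [integral_const_mul, integral_sub (integrable_div_ofReal_sub hVm hV₁ hV₂ hz)
    (integrable_div_ofReal_sub hVm hV₁ hV₂ (by simpa using hz))]
  rfl

lemma mul_integral_poisson_eq_sub (hVm : AEStronglyMeasurable V)
    (hV₁ : ∀ x, ‖V x‖ ≤ C₁) (hV₂ : ∀ x : ℝ, ‖(x : ℂ) * V x‖ ≤ C₂) (hz : 0 < z.im) :
    z * ∫ x : ℝ, (z.im : ℂ) * V x / ((‖z - x‖ ^ 2 : ℝ) : ℂ)
      = (∫ x : ℝ, (z.im : ℂ) * (x * V x) / ((‖z - x‖ ^ 2 : ℝ) : ℂ))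
        - z.im * cauchyTransform V (conj z) := by
  rw [← integral_const_mul]
  simp_rw [mul_poisson_eq_sub _ _ hz.ne']
  rw [integral_sub (integrable_poisson_mul (by fun_prop) hV₂ hz)
    ((integrable_div_ofReal_sub hVm hV₁ hV₂ (by simpa using hz.ne')).const_mul _),
    integral_const_mul]
  rfl

end PoissonCauchy

lemma cauchyTransform_conj_eq_zero {U : ℂ → ℂ} {C₁ C₂ : ℝ}
    (hholo : DifferentiableOn ℂ U {z : ℂ | 0 < z.im})
    (hUm : AEStronglyMeasurable fun x : ℝ => U x) (hU₁ : ∀ x : ℝ, ‖U x‖ ≤ C₁)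
    (hU₂ : ∀ x : ℝ, ‖(x : ℂ) * U x‖ ≤ C₂)
    (hPoisson : ∀ z : ℂ, 0 < z.im →
      U z = (1 / (Real.pi : ℂ)) * ∫ x : ℝ, (z.im : ℂ) * U x / ((‖z - x‖ : ℝ) ^ 2 : ℝ))
    {z : ℂ} (hz : 0 < z.im) :
    cauchyTransform (fun x => U x) (conj z) = 0 := by
  set G : ℂ → ℂ := fun w => cauchyTransform (fun x => U x) (conj w)
  have hs : IsOpen {w : ℂ | 0 < w.im} := isOpen_lt continuous_const continuous_im
  have hGF : ∀ w : ℂ, 0 < w.im →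
      G w = cauchyTransform (fun x => U x) w - 2 * Real.pi * I * U w := by
    intro w hw
    rw [hPoisson w hw, integral_poisson_eq_cauchyTransform_sub hUm hU₁ hU₂ hw.ne']
    field_simp
    ring
  have hG' : ∀ w : ℂ, 0 < w.im → HasDerivAt G 0 w := by
    intro w hw
    have hU := (hholo.differentiableAt (hs.mem_nhds hw)).hasDerivAt
    have hG := ((hasDerivAt_cauchyTransform hUm hU₁ hU₂ hw.ne').sub
      (hU.const_mul (2 * Real.pi * I))).congr_of_eventuallyEq
      (Filter.mem_of_superset (hs.mem_nhds hw) fun u hu => hGF u hu)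
    have hconjG : DifferentiableAt ℂ (fun u => conj (G u)) w := by
      simp only [G, conj_cauchyTransform, conj_conj]
      exact (hasDerivAt_cauchyTransform (continuous_conj.comp_aestronglyMeasurable hUm)
        (C₁ := C₁) (C₂ := C₂) (by simpa using hU₁) (by simpa using hU₂) hw.ne').differentiableAt
    rwa [hG.eq_zero_of_hasDerivAt_conj hconjG.hasDerivAt] at hG
  have hGconst : ∀ w : ℂ, 0 < w.im → G w = G z := fun w hw =>
    hs.is_const_of_deriv_eq_zero (convex_halfSpace_im_gt 0).isPreconnected
      (fun u hu => (hG' u hu).differentiableAt.differentiableWithinAt)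
      (fun u hu => (hG' u hu).deriv) hw hz
  have hG_lim : Tendsto (fun t : ℝ => G (t * I)) atTop (𝓝 0) := by
    refine ((tendsto_cauchyTransform_mul_I_atBot hUm hU₁ hU₂).comp tendsto_neg_atTop_atBot).congr
      fun t => ?_
    simp [G, map_mul, conj_ofReal, conj_I]
  refine tendsto_nhds_unique (tendsto_const_nhds.congr' ?_) hG_lim
  filter_upwards [eventually_gt_atTop 0] with t ht
  exact (hGconst _ (by simpa using ht)).symm

lemma tendsto_apply_I_div_of_norm_mul_le {f : ℂ → ℂ} {M : ℝ}
    (hf : ∀ z : ℂ, 0 < z.im → ‖z * f z‖ ≤ M) :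
    Tendsto (fun ε : ℝ => f (I / ε)) (𝓝[>] 0) (𝓝 0) := by
  refine squeeze_zero_norm' (a := fun ε => ε * M) ?_ ?_
  · filter_upwards [self_mem_nhdsWithin] with ε (hε : 0 < ε)
    have h := hf (I / ε) (by simpa using hε)
    rw [norm_mul, norm_div, norm_I, norm_real, Real.norm_of_nonneg hε.le] at h
    calc ‖f (I / ε)‖ = ε * (1 / ε * ‖f (I / ε)‖) := by field_simp
      _ ≤ ε * M := by gcongr
  · simpa using (tendsto_id.mul_const M).mono_left (nhdsWithin_le_nhds (a := (0 : ℝ)))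

/-- **Decay of a bounded holomorphic function with decaying boundary values.**
If `U` is holomorphic on the upper half-plane, continuous up to `ℝ`, given by the
Poisson integral of its bounded boundary values, and `x·U(x)` is bounded on `ℝ`, then
`z·U(z)` is bounded on the closed upper half-plane; in particular `U(i/ε) → 0` as
`ε → 0⁺`. -/
theorem stmt_11 (U : ℂ → ℂ)
    (hholo : DifferentiableOn ℂ U {z : ℂ | 0 < z.im})
    (hcont : ContinuousOn U {z : ℂ | 0 ≤ z.im})
    (hb : ∃ C : ℝ, ∀ x : ℝ, ‖U x‖ ≤ C)
    (hxb : ∃ C : ℝ, ∀ x : ℝ, ‖(x : ℂ) * U x‖ ≤ C)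
    (hPoisson : ∀ z : ℂ, 0 < z.im →
      U z = (1 / (Real.pi : ℂ)) * ∫ x : ℝ, (z.im : ℂ) * U x / ((‖z - x‖ : ℝ) ^ 2 : ℝ)) :
    (∃ M : ℝ, ∀ z : ℂ, 0 ≤ z.im → ‖z * U z‖ ≤ M) ∧
    Tendsto (fun ε : ℝ => U (Complex.I / (ε : ℂ))) (nhdsWithin 0 (Set.Ioi 0)) (nhds 0) := by
  obtain ⟨C₁, hU₁⟩ := hb
  obtain ⟨C₂, hU₂⟩ := hxb
  have hUm : AEStronglyMeasurable fun x : ℝ => U x :=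
    (hcont.comp_continuous continuous_ofReal fun x => by simp).aestronglyMeasurable
  have hbound : ∀ z : ℂ, 0 ≤ z.im → ‖z * U z‖ ≤ C₂ := by
    intro z hz
    rcases hz.eq_or_lt with hz | hz
    · rw [← re_add_im z, ← hz, ofReal_zero, zero_mul, add_zero]
      exact hU₂ z.re
    · rw [hPoisson z hz, mul_left_comm, mul_integral_poisson_eq_sub hUm hU₁ hU₂ hz,
        cauchyTransform_conj_eq_zero hholo hUm hU₁ hU₂ hPoisson hz, mul_zero, sub_zero, norm_mul,
        norm_div, norm_one, norm_real, Real.norm_of_nonneg Real.pi_pos.le]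
      calc 1 / Real.pi * _ ≤ 1 / Real.pi * (Real.pi * C₂) := by
            gcongr; exact norm_integral_poisson_mul_le hU₂ hz
        _ = C₂ := by field_simp
  exact ⟨⟨C₂, hbound⟩, tendsto_apply_I_div_of_norm_mul_le fun z hz => hbound z hz.le⟩
end

section
/- Let u be a rational function in the Hardy space L²₊(ℝ) whose Hankel operator H_u has finite rank N with Ran(H_u) spanned by {1/(x-p_j)^{l}: 1 ≤ j ≤ k, 1 ≤ l ≤ m_j}. Define T on Ran(H_u) by T(f) = x f - Λ(f)·b_u, where Λ(f) = lim_{x→∞} x f(x) and b_u = ∏_j ((x-conj(p_j))/(x-p_j))^{m_j}. Then every eigenvalue of T equals conj(p_j) for some j; in particular every eigenvalue of T has strictly positive imaginary part. -/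
open Complex Filter Polynomial

/-!
Clearing the denominators `∏ (x - p_j)^{m_j}` turns the eigenvalue equation
`(x - μ) f(x) = Λ b_u(x)` on the real line into the polynomial identity
`(X - μ) P = Λ ∏ (X - conj p_j)^{m_j}` with `P ≠ 0` since `f ≠ 0`. Then `Λ ≠ 0`, and
evaluating at `μ` shows that `μ` is one of the roots `conj p_j`.
-/

lemma Complex.ofReal_ne_of_im_ne_zero {z : ℂ} (hz : z.im ≠ 0) (x : ℝ) : (x : ℂ) ≠ z :=
  fun h => hz (by rw [← h, ofReal_im])

lemma Polynomial.eq_of_eval_ofReal_eq {P Q : ℂ[X]}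
    (h : ∀ x : ℝ, P.eval (x : ℂ) = Q.eval (x : ℂ)) : P = Q := by
  refine eq_of_infinite_eval_eq P Q ((Set.infinite_range_of_injective ofReal_injective).mono ?_)
  rintro _ ⟨x, rfl⟩
  exact h x

section ClearingDenominators

variable {K ι : Type*} [Field K] [Fintype ι]

lemma div_pow_succ_mul_pow_eq {x p : K} (hx : x ≠ p) (c : K) {l m : ℕ} (hl : l < m) :
    c / (x - p) ^ (l + 1) * (x - p) ^ m = c * (x - p) ^ (m - (l + 1)) := by
  rw [pow_sub₀ _ (sub_ne_zero.2 hx) hl, div_mul_eq_mul_div, mul_div_assoc, div_eq_mul_inv]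

lemma exists_eval_eq_sum_div_pow_mul_prod (p : ι → K) (m : ι → ℕ)
    (a : (i : ι) → Fin (m i) → K) :
    ∃ P : K[X], ∀ x, (∀ i, x ≠ p i) →
      P.eval x = (∑ i, ∑ l, a i l / (x - p i) ^ ((l : ℕ) + 1)) * ∏ i, (x - p i) ^ m i := by
  classical
  refine ⟨∑ i, ∑ l : Fin (m i), C (a i l) * (X - C (p i)) ^ (m i - ((l : ℕ) + 1)) *
      ∏ i' ∈ Finset.univ.erase i, (X - C (p i')) ^ m i', fun x hx => ?_⟩
  simp only [eval_finsetSum, eval_mul, eval_prod, eval_pow, eval_sub, eval_X, eval_C,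
    Finset.sum_mul]
  refine Finset.sum_congr rfl fun i _ => Finset.sum_congr rfl fun l _ => ?_
  rw [← Finset.mul_prod_erase Finset.univ _ (Finset.mem_univ i), ← mul_assoc,
    div_pow_succ_mul_pow_eq (hx i) _ l.isLt]

lemma prod_div_pow_mul_prod_pow {x : K} {p : ι → K} (hx : ∀ i, x ≠ p i) (q : ι → K)
    (m : ι → ℕ) :
    (∏ i, ((x - q i) / (x - p i)) ^ m i) * ∏ i, (x - p i) ^ m i = ∏ i, (x - q i) ^ m i := by
  rw [← Finset.prod_mul_distrib]
  refine Finset.prod_congr rfl fun i _ => ?_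
  rw [div_pow, div_mul_cancel₀ _ (pow_ne_zero _ (sub_ne_zero.2 (hx i)))]

end ClearingDenominators

lemma Polynomial.exists_eq_of_X_sub_C_mul_eq_C_mul_prod {R ι : Type*} [CommRing R] [IsDomain R]
    [Fintype ι] {μ c : R} {q : ι → R} {m : ι → ℕ} {P : R[X]} (hP : P ≠ 0)
    (h : (X - C μ) * P = C c * ∏ i, (X - C (q i)) ^ m i) : ∃ i, μ = q i := by
  have hc : c ≠ 0 := by
    rintro rfl
    simp [X_sub_C_ne_zero, hP] at h
  have hμ := congrArg (eval μ) h
  simp only [eval_mul, eval_sub, eval_X, eval_C, sub_self, zero_mul, eval_prod,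
    eval_pow] at hμ
  obtain ⟨i, -, hi⟩ := Finset.prod_eq_zero_iff.1 ((mul_eq_zero.1 hμ.symm).resolve_left hc)
  exact ⟨i, sub_eq_zero.1 (pow_eq_zero_iff'.1 hi).1⟩

theorem stmt_13_general (k : ℕ) (p : Fin k → ℂ) (hp : ∀ j, (p j).im < 0) (m : Fin k → ℕ)
    (a : (j : Fin k) → Fin (m j) → ℂ) (f : ℝ → ℂ)
    (hf : ∀ x : ℝ, f x = ∑ j, ∑ l, a j l / ((x : ℂ) - p j) ^ ((l : ℕ) + 1))
    (hf0 : ∃ x : ℝ, f x ≠ 0)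
    (bu : ℝ → ℂ)
    (hbu : ∀ x : ℝ, bu x = ∏ j, (((x : ℂ) - (starRingEnd ℂ) (p j)) / ((x : ℂ) - p j)) ^ (m j))
    (Λ μ : ℂ)
    (heig : ∀ x : ℝ, (x : ℂ) * f x - Λ * bu x = μ * f x) :
    (∃ j, μ = (starRingEnd ℂ) (p j)) ∧ 0 < μ.im := by
  have hx : ∀ (x : ℝ) j, (x : ℂ) ≠ p j := fun x j => ofReal_ne_of_im_ne_zero (hp j).ne x
  obtain ⟨P, hP⟩ := exists_eval_eq_sum_div_pow_mul_prod p m a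
  have hPf : ∀ x : ℝ, P.eval (x : ℂ) = f x * ∏ j, ((x : ℂ) - p j) ^ m j := fun x => by
    rw [hf x]
    exact hP x (hx x)
  have hP0 : P ≠ 0 := by
    rintro rfl
    obtain ⟨x, hfx⟩ := hf0
    have hprod : ∏ j, ((x : ℂ) - p j) ^ m j ≠ 0 :=
      Finset.prod_ne_zero_iff.2 fun j _ => pow_ne_zero _ (sub_ne_zero.2 (hx x j))
    simpa [hfx, hprod] using hPf x
  have hPQ : (X - C μ) * P = C Λ * ∏ j, (X - C ((starRingEnd ℂ) (p j))) ^ m j := by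
    refine Polynomial.eq_of_eval_ofReal_eq fun x => ?_
    simp only [eval_mul, eval_sub, eval_X, eval_C, eval_prod, eval_pow, hPf x]
    rw [← prod_div_pow_mul_prod_pow (hx x) (fun j => (starRingEnd ℂ) (p j)), ← hbu x]
    linear_combination (∏ j, ((x : ℂ) - p j) ^ m j) * heig x
  obtain ⟨j, hj⟩ := exists_eq_of_X_sub_C_mul_eq_C_mul_prod hP0 hPQ
  exact ⟨⟨j, hj⟩, by simpa [hj] using hp j⟩

/-- **Eigenvalues of the infinitesimal shift operator.**  Let `T f = x f - Λ(f) b_u` on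
`Ran H_u = span{1/(x-p_j)^l}`, with `b_u` the Blaschke product associated with the poles
`p_j` (all of them in the lower half-plane) with multiplicities `m_j`, and
`Λ(f) = lim_{x→∞} x f(x)`.  If `f ∈ Ran H_u` is a nonzero eigenvector of `T` with
eigenvalue `μ`, then `μ = conj p_j` for some `j`; in particular `Im μ > 0`. -/
theorem stmt_13 (k : ℕ) (p : Fin k → ℂ) (hp : ∀ j, (p j).im < 0) (m : Fin k → ℕ)
    (a : (j : Fin k) → Fin (m j) → ℂ) (f : ℝ → ℂ)
    (hf : ∀ x : ℝ, f x = ∑ j, ∑ l, a j l / ((x : ℂ) - p j) ^ ((l : ℕ) + 1))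
    (hf0 : ∃ x : ℝ, f x ≠ 0)
    (bu : ℝ → ℂ)
    (hbu : ∀ x : ℝ, bu x = ∏ j, (((x : ℂ) - (starRingEnd ℂ) (p j)) / ((x : ℂ) - p j)) ^ (m j))
    (Λ μ : ℂ)
    (hΛ : Tendsto (fun x : ℝ => (x : ℂ) * f x) atTop (nhds Λ))
    (heig : ∀ x : ℝ, (x : ℂ) * f x - Λ * bu x = μ * f x) :
    (∃ j, μ = (starRingEnd ℂ) (p j)) ∧ 0 < μ.im :=
  stmt_13_general k p hp m a f hf hf0 bu hbu Λ μ heig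
end
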